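/- The set of convolution products { z_1^{j_0}·z_p^{j_1}·⋯·z_{p^{n-1}}^{j_{n-1}} : 0 ≤ j_s ≤ p-1 for all 0 ≤ s ≤ n-1 } is a K-basis of H; in particular, the elements z_{p^s}, 0 ≤ s ≤ n-1, generate H as a K-algebra. -/

import Mathlib

open Polynomial TensorProduct

noncomputable section

/-- The truncated polynomial algebra `K[t]/(t^{p^n})`, underlying the Hopf algebra
`H_{n,r,f}`. -/
abbrev TruncAlg (K : Type) [Field K] (p n : ℕ) : Type :=
  AdjoinRoot (X ^ p ^ n : K[X])

/-- `t`, the image of `X` in `K[t]/(t^{p^n})`. -/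
def tgen (K : Type) [Field K] (p n : ℕ) : TruncAlg K p n :=
  AdjoinRoot.root _

/-- The basis `1, t, t^2, …, t^{p^n-1}` of `K[t]/(t^{p^n})`. -/
def tbasis (K : Type) [Field K] (p n : ℕ) :
    Module.Basis (Fin (p ^ n)) K (TruncAlg K p n) :=
  (AdjoinRoot.powerBasis (f := (X ^ p ^ n : K[X]))
    (pow_ne_zero _ Polynomial.X_ne_zero)).basis.reindex
    (finCongr (by simp))

/-- The dual basis functional `z_j ∈ H = H_{n,r,f}^*`, with `z_j (t^i) = δ_{ij}`;
junk value `0` out of range. -/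
def zdual (K : Type) [Field K] (p n : ℕ) (j : ℕ) :
    Module.Dual K (TruncAlg K p n) :=
  if h : j < p ^ n then (tbasis K p n).coord ⟨j, h⟩ else 0

/-- The coefficient `1/(ℓ!(p-ℓ)!)`, computed in the prime field of `K`. -/
def pfCoeff (K : Type) [Field K] (p ℓ : ℕ) : K :=
  ((ℓ.factorial * (p - ℓ).factorial : ℕ) : K)⁻¹

/-- The element `Δ(t) = t⊗1 + 1⊗t + f Σ_{ℓ=1}^{p-1} (1/(ℓ!(p-ℓ)!)) t^{p^r ℓ} ⊗ t^{p^r (p-ℓ)}`. -/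
def Delta_t (K : Type) [Field K] (p n r : ℕ) (f : K) :
    TruncAlg K p n ⊗[K] TruncAlg K p n :=
  tgen K p n ⊗ₜ 1 + 1 ⊗ₜ tgen K p n +
    f • ∑ ℓ ∈ Finset.Icc 1 (p - 1),
      pfCoeff K p ℓ • ((tgen K p n ^ (p ^ r * ℓ)) ⊗ₜ[K] (tgen K p n ^ (p ^ r * (p - ℓ))))

/-- The comultiplication of `H_{n,r,f}` as a linear map, determined by `Δ(t^i) = Δ(t)^i`
(it is the unique `K`-algebra map with `t ↦ Δ(t)`). -/
def DeltaMap (K : Type) [Field K] (p n r : ℕ) (f : K) :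
    TruncAlg K p n →ₗ[K] TruncAlg K p n ⊗[K] TruncAlg K p n :=
  (tbasis K p n).constr K fun i => (Delta_t K p n r f) ^ (i : ℕ)

/-- Convolution product on `H = (H_{n,r,f})^*`:  `(z * z')(h) = mult ((z ⊗ z')(Δ h))`. -/
def conv (K : Type) [Field K] (p n r : ℕ) (f : K)
    (z z' : Module.Dual K (TruncAlg K p n)) : Module.Dual K (TruncAlg K p n) :=
  (LinearMap.mul' K K) ∘ₗ (TensorProduct.map z z') ∘ₗ DeltaMap K p n r f

/-- Convolution powers; the 0th power is the unit `z_0 = ε` of `H`. -/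
def convPow (K : Type) [Field K] (p n r : ℕ) (f : K)
    (z : Module.Dual K (TruncAlg K p n)) : ℕ → Module.Dual K (TruncAlg K p n)
  | 0 => zdual K p n 0
  | m + 1 => conv K p n r f (convPow K p n r f z m) z

/-- The convolution product `z_1^{j 0} · z_p^{j 1} ⋯ z_{p^{m-1}}^{j (m-1)}` in `H`. -/
def zprod (K : Type) [Field K] (p n r : ℕ) (f : K)
    (j : ℕ → ℕ) : ℕ → Module.Dual K (TruncAlg K p n)
  | 0 => zdual K p n 0
  | m + 1 => conv K p n r f (zprod K p n r f j m)
      (convPow K p n r f (zdual K p n (p ^ m)) (j m))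

/-!
Say that a functional `z` on `K[t]/(t^{p^n})` has top degree `N` if `z (t^a) = 0` for `a > N` and
`z (t^N) ≠ 0`. Since `Δ(t) ≡ t ⊗ 1 + 1 ⊗ t` modulo terms of total degree at least `2`, top degrees
add under convolution, the new leading coefficient being `choose (M + N) M * z (t^M) * z' (t^N)`.
By Lucas's theorem none of the binomial coefficients met in building
`z_1^{j_0} ⋯ z_{p^{n-1}}^{j_{n-1}}` vanishes mod `p`, so this product has top degree `∑ j_s p^s`.
These degrees run over `0, …, p^n - 1` exactly once, so the products form a triangular family
with invertible diagonal with respect to the basis dual to `1, t, …, t^{p^n-1}`.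
-/

section DegreeFiltration

variable (R : Type*) {A : Type*} [CommRing R] [CommRing A] [Algebra R A] (t : A)

def degreeFiltration (k : ℕ) : Submodule R (A ⊗[R] A) :=
  Submodule.span R {x | ∃ a b : ℕ, k ≤ a + b ∧ x = (t ^ a) ⊗ₜ[R] (t ^ b)}

variable {R t}

theorem tmul_pow_mem_degreeFiltration {k a b : ℕ} (h : k ≤ a + b) :
    (t ^ a) ⊗ₜ[R] (t ^ b) ∈ degreeFiltration R t k :=
  Submodule.subset_span ⟨a, b, h, rfl⟩

theorem degreeFiltration_antitone : Antitone (degreeFiltration R t) := fun _ _ hjk =>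
  Submodule.span_mono fun _ ⟨a, b, hab, hx⟩ => ⟨a, b, hjk.trans hab, hx⟩

theorem mul_mem_degreeFiltration {j k : ℕ} {x y : A ⊗[R] A}
    (hx : x ∈ degreeFiltration R t j) (hy : y ∈ degreeFiltration R t k) :
    x * y ∈ degreeFiltration R t (j + k) := by
  have hle : degreeFiltration R t j * degreeFiltration R t k ≤ degreeFiltration R t (j + k) := by
    rw [degreeFiltration, degreeFiltration, Submodule.span_mul_span, Submodule.span_le]
    rintro _ ⟨_, ⟨a, b, hab, rfl⟩, _, ⟨c, d, hcd, rfl⟩, rfl⟩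
    change _ * _ ∈ _
    rw [Algebra.TensorProduct.tmul_mul_tmul, ← pow_add, ← pow_add]
    exact tmul_pow_mem_degreeFiltration (by omega)
  exact hle (Submodule.mul_mem_mul hx hy)

theorem pow_mem_degreeFiltration {x : A ⊗[R] A} (hx : x ∈ degreeFiltration R t 1) (i : ℕ) :
    x ^ i ∈ degreeFiltration R t i := by
  induction i with
  | zero => simpa [Algebra.TensorProduct.one_def] using
      tmul_pow_mem_degreeFiltration (a := 0) (b := 0) le_rfl
  | succ i ih => exact pow_succ x i ▸ mul_mem_degreeFiltration ih hx

theorem tmul_one_add_one_tmul_mem_degreeFiltration :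
    t ⊗ₜ[R] (1 : A) + 1 ⊗ₜ t ∈ degreeFiltration R t 1 := by
  apply Submodule.add_mem
  · simpa using tmul_pow_mem_degreeFiltration (a := 1) (b := 0) le_rfl
  · simpa using tmul_pow_mem_degreeFiltration (a := 0) (b := 1) le_rfl

theorem mem_degreeFiltration_one_of_sub_mem {x y : A ⊗[R] A}
    (hy : y ∈ degreeFiltration R t 1) (hxy : x - y ∈ degreeFiltration R t 2) :
    x ∈ degreeFiltration R t 1 :=
  sub_add_cancel x y ▸ add_mem (degreeFiltration_antitone (by omega) hxy) hy

theorem pow_sub_pow_mem_degreeFiltration {x y : A ⊗[R] A} (hy : y ∈ degreeFiltration R t 1)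
    (hxy : x - y ∈ degreeFiltration R t 2) (i : ℕ) :
    x ^ i - y ^ i ∈ degreeFiltration R t (i + 1) := by
  have hx := mem_degreeFiltration_one_of_sub_mem hy hxy
  induction i with
  | zero => simp
  | succ i ih =>
    have hsplit : x ^ (i + 1) - y ^ (i + 1) = x ^ i * (x - y) + (x ^ i - y ^ i) * y := by ring
    rw [hsplit]
    exact add_mem (degreeFiltration_antitone (by omega)
        (mul_mem_degreeFiltration (pow_mem_degreeFiltration hx i) hxy))
      (mul_mem_degreeFiltration ih hy)

end DegreeFiltration

section TopDegree

variable {R A : Type*} [CommRing R] [CommRing A] [Algebra R A] (t : A)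

def VanishesAbove (z : Module.Dual R A) (N : ℕ) : Prop :=
  ∀ a, N < a → z (t ^ a) = 0

def HasTopDegree (z : Module.Dual R A) (N : ℕ) : Prop :=
  VanishesAbove t z N ∧ z (t ^ N) ≠ 0

variable {t} {z z' : Module.Dual R A} {M N : ℕ}

theorem mul'_map_eq_zero_of_mem_degreeFiltration (hz : VanishesAbove t z M)
    (hz' : VanishesAbove t z' N) {u : A ⊗[R] A} (hu : u ∈ degreeFiltration R t (M + N + 1)) :
    LinearMap.mul' R R (map z z' u) = 0 := by
  suffices degreeFiltration R t (M + N + 1) ≤ LinearMap.ker (LinearMap.mul' R R ∘ₗ map z z')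
    from this hu
  rw [degreeFiltration, Submodule.span_le]
  rintro _ ⟨a, b, hab, rfl⟩
  rw [SetLike.mem_coe, LinearMap.mem_ker, LinearMap.comp_apply, map_tmul, LinearMap.mul'_apply]
  rcases lt_or_ge M a with ha | ha
  · rw [hz a ha, zero_mul]
  · rw [hz' b (by omega), mul_zero]

theorem mul'_map_tmul_one_add_one_tmul_pow (hz : VanishesAbove t z M)
    (hz' : VanishesAbove t z' N) :
    LinearMap.mul' R R (map z z' ((t ⊗ₜ[R] (1 : A) + 1 ⊗ₜ t) ^ (M + N))) =
      (M + N).choose M * (z (t ^ M) * z' (t ^ N)) := by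
  have hterm : ∀ a, LinearMap.mul' R R (map z z'
      ((t ⊗ₜ[R] (1 : A)) ^ a * (1 ⊗ₜ t) ^ (M + N - a) * ((M + N).choose a : A ⊗[R] A))) =
      (M + N).choose a * (z (t ^ a) * z' (t ^ (M + N - a))) := by
    intro a
    rw [Algebra.TensorProduct.tmul_pow, Algebra.TensorProduct.tmul_pow,
      Algebra.TensorProduct.tmul_mul_tmul, one_pow, one_pow, mul_one, one_mul, mul_comm,
      ← nsmul_eq_mul, map_nsmul, map_nsmul, map_tmul, LinearMap.mul'_apply, nsmul_eq_mul]
  rw [add_pow, map_sum, map_sum, Finset.sum_congr rfl fun a _ => hterm a,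
    Finset.sum_eq_single M, Nat.add_sub_cancel_left]
  · intro a _ ha
    rcases lt_or_ge M a with h | h
    · rw [hz a h, zero_mul, mul_zero]
    · rw [hz' (M + N - a) (by omega), mul_zero, mul_zero]
  · intro h
    exact absurd (Finset.mem_range.2 (by omega)) h

end TopDegree

theorem Module.Basis.linearIndependent_and_span_eq_top_of_repr_triangular
    {R M ι κ : Type*} [CommRing R] [AddCommGroup M] [Module R M] [Fintype ι] [LinearOrder ι]
    (e : Module.Basis ι R M) (σ : κ ≃ ι) {w : κ → M}
    (hzero : ∀ k i, σ k < i → e.repr (w k) i = 0)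
    (hdiag : ∀ k, IsUnit (e.repr (w k) (σ k))) :
    LinearIndependent R w ∧ Submodule.span R (Set.range w) = ⊤ := by
  classical
  have htri : (e.toMatrix (w ∘ σ.symm)).IsUpperTriangular := fun i k hki => by
    simpa [Module.Basis.toMatrix_apply] using hzero (σ.symm k) i (by simpa using hki)
  obtain ⟨hli, hspan⟩ := (e.is_basis_iff_det).2 <| by
    rw [e.det_apply, Matrix.det_of_isUpperTriangular htri]
    exact IsUnit.prod_univ_iff.2 fun i => by
      simpa [Module.Basis.toMatrix_apply] using hdiag (σ.symm i)
  refine ⟨by simpa [Function.comp_assoc] using hli.comp σ σ.injective, ?_⟩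
  rwa [← σ.symm.surjective.range_comp]

section Lucas

variable {p : ℕ} [Fact p.Prime]

theorem choose_add_mul_pow_modEq_one {m N : ℕ} (j : ℕ) (hN : N < p ^ m) :
    (N + j * p ^ m).choose N ≡ 1 [MOD p] := by
  induction m generalizing N with
  | zero =>
    obtain rfl : N = 0 := by simpa using hN
    simp [Nat.ModEq.refl]
  | succ m ih =>
    have hp : 0 < p := (Fact.out : p.Prime).pos
    have hlucas := Choose.choose_modEq_choose_mod_mul_choose_div_nat (p := p)
      (n := N + j * p ^ m * p) (k := N)
    rw [Nat.add_mul_mod_self_right, Nat.add_mul_div_right _ _ hp, Nat.choose_self,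
      one_mul] at hlucas
    rw [pow_succ, ← mul_assoc]
    exact hlucas.trans (ih (Nat.div_lt_of_lt_mul (by rwa [mul_comm, ← pow_succ])))

theorem choose_mul_pow_modEq {m k : ℕ} :
    ((k + 1) * p ^ m).choose (k * p ^ m) ≡ k + 1 [MOD p] := by
  simpa [mul_comm] using
    Choose.choose_pow_mul_pow_mul_modEq_choose_nat (p := p) (k := m) (a := k + 1) (b := k)

end Lucas

theorem sum_range_mul_pow_lt {p : ℕ} {j : ℕ → ℕ} (hj : ∀ s, j s < p) (m : ℕ) :
    ∑ s ∈ Finset.range m, j s * p ^ s < p ^ m := by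
  induction m with
  | zero => simp
  | succ m ih =>
    calc ∑ s ∈ Finset.range (m + 1), j s * p ^ s
        < p ^ m + j m * p ^ m := by rw [Finset.sum_range_succ]; omega
      _ = (j m + 1) * p ^ m := by ring
      _ ≤ p ^ (m + 1) := by rw [pow_succ']; exact Nat.mul_le_mul_right _ (hj m)

section Truncated

variable {K : Type} [Field K] {p n r : ℕ} {f : K}

theorem tgen_pow_eq_zero {a : ℕ} (ha : p ^ n ≤ a) : tgen K p n ^ a = 0 := by
  obtain ⟨b, rfl⟩ := Nat.exists_eq_add_of_le ha
  rw [pow_add, tgen, ← AdjoinRoot.mk_X, ← map_pow, AdjoinRoot.mk_self, zero_mul]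

theorem tbasis_apply (i : Fin (p ^ n)) : tbasis K p n i = tgen K p n ^ (i : ℕ) := by
  simp [tbasis, tgen]

theorem zdual_tgen_pow {i j : ℕ} (hi : i < p ^ n) (hj : j < p ^ n) :
    zdual K p n j (tgen K p n ^ i) = if i = j then 1 else 0 := by
  rw [zdual, dif_pos hj, ← tbasis_apply ⟨i, hi⟩, Module.Basis.coord_apply,
    Module.Basis.repr_self, Finsupp.single_apply]
  simp [Fin.ext_iff]

theorem zdual_hasTopDegree {j : ℕ} (hj : j < p ^ n) :
    HasTopDegree (tgen K p n) (zdual K p n j) j := by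
  refine ⟨fun a ha => ?_, by simp [zdual_tgen_pow hj hj]⟩
  rcases lt_or_ge a (p ^ n) with h | h
  · rw [zdual_tgen_pow h hj, if_neg ha.ne']
  · rw [tgen_pow_eq_zero h, map_zero]

theorem DeltaMap_tgen_pow {i : ℕ} (hi : i < p ^ n) :
    DeltaMap K p n r f (tgen K p n ^ i) = Delta_t K p n r f ^ i := by
  rw [← tbasis_apply ⟨i, hi⟩, DeltaMap, Module.Basis.constr_basis]

theorem Delta_t_sub_mem_degreeFiltration :
    Delta_t K p n r f - (tgen K p n ⊗ₜ 1 + 1 ⊗ₜ tgen K p n) ∈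
      degreeFiltration K (tgen K p n) 2 := by
  rw [Delta_t, add_sub_cancel_left]
  refine Submodule.smul_mem _ _ (Submodule.sum_mem _ fun ℓ hℓ => Submodule.smul_mem _ _ ?_)
  rw [Finset.mem_Icc] at hℓ
  have hpr : 1 ≤ p ^ r := Nat.one_le_pow _ _ (by omega)
  exact tmul_pow_mem_degreeFiltration
    (by nlinarith [Nat.mul_le_mul hpr hℓ.1, Nat.mul_le_mul hpr (show 1 ≤ p - ℓ by omega)])

theorem conv_hasTopDegree {z z' : Module.Dual K (TruncAlg K p n)} {M N : ℕ}
    (hz : HasTopDegree (tgen K p n) z M) (hz' : HasTopDegree (tgen K p n) z' N)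
    (hlt : M + N < p ^ n) (hchoose : ((M + N).choose M : K) ≠ 0) :
    HasTopDegree (tgen K p n) (conv K p n r f z z') (M + N) := by
  have hprim := tmul_one_add_one_tmul_mem_degreeFiltration (R := K) (t := tgen K p n)
  have hDelta := Delta_t_sub_mem_degreeFiltration (p := p) (n := n) (r := r) (f := f)
  constructor
  · intro a ha
    rcases lt_or_ge a (p ^ n) with h | h
    · rw [conv, LinearMap.comp_apply, LinearMap.comp_apply, DeltaMap_tgen_pow h]
      exact mul'_map_eq_zero_of_mem_degreeFiltration hz.1 hz'.1 (degreeFiltration_antitone ha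
        (pow_mem_degreeFiltration (mem_degreeFiltration_one_of_sub_mem hprim hDelta) a))
    · rw [tgen_pow_eq_zero h, map_zero]
  · rw [conv, LinearMap.comp_apply, LinearMap.comp_apply, DeltaMap_tgen_pow hlt,
      ← sub_add_cancel (Delta_t K p n r f ^ (M + N)) _, map_add, map_add,
      mul'_map_eq_zero_of_mem_degreeFiltration hz.1 hz'.1
        (pow_sub_pow_mem_degreeFiltration hprim hDelta _),
      zero_add, mul'_map_tmul_one_add_one_tmul_pow hz.1 hz'.1]
    exact mul_ne_zero hchoose (mul_ne_zero hz.2 hz'.2)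

variable [Fact p.Prime] [CharP K p]

theorem convPow_zdual_hasTopDegree {m k : ℕ} (hm : m < n) (hk : k < p) :
    HasTopDegree (tgen K p n) (convPow K p n r f (zdual K p n (p ^ m)) k) (k * p ^ m) := by
  have hpm : p ^ (m + 1) ≤ p ^ n := Nat.pow_le_pow_right (Fact.out : p.Prime).pos hm
  induction k with
  | zero =>
    simpa [convPow] using zdual_hasTopDegree (K := K) (pow_pos (Fact.out : p.Prime).pos n)
  | succ k ih =>
    have hlt : (k + 1) * p ^ m < p ^ (m + 1) := by
      rw [pow_succ']
      exact Nat.mul_lt_mul_of_pos_right hk (pow_pos (Fact.out : p.Prime).pos m)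
    have hchoose : (((k + 1) * p ^ m).choose (k * p ^ m) : K) ≠ 0 := by
      rw [(CharP.natCast_eq_natCast K p).2 choose_mul_pow_modEq, Ne, CharP.cast_eq_zero_iff K p]
      exact Nat.not_dvd_of_pos_of_lt k.succ_pos hk
    rw [add_one_mul] at hlt hchoose ⊢
    exact conv_hasTopDegree (ih (by omega)) (zdual_hasTopDegree (by omega)) (by omega) hchoose

theorem zprod_hasTopDegree {j : ℕ → ℕ} (hj : ∀ s, j s < p) {m : ℕ} (hm : m ≤ n) :
    HasTopDegree (tgen K p n) (zprod K p n r f j m) (∑ s ∈ Finset.range m, j s * p ^ s) := by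
  induction m with
  | zero =>
    simpa [zprod] using zdual_hasTopDegree (K := K) (pow_pos (Fact.out : p.Prime).pos n)
  | succ m ih =>
    have hlt : ∑ s ∈ Finset.range (m + 1), j s * p ^ s < p ^ n :=
      (sum_range_mul_pow_lt hj _).trans_le
        (Nat.pow_le_pow_right (Fact.out : p.Prime).pos hm)
    have hchoose : ((∑ s ∈ Finset.range (m + 1), j s * p ^ s).choose
        (∑ s ∈ Finset.range m, j s * p ^ s) : K) ≠ 0 := by
      rw [Finset.sum_range_succ, (CharP.natCast_eq_natCast K p).2
        (choose_add_mul_pow_modEq_one _ (sum_range_mul_pow_lt hj m)), Nat.cast_one]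
      exact one_ne_zero
    rw [Finset.sum_range_succ] at hlt hchoose ⊢
    exact conv_hasTopDegree (ih (by omega)) (convPow_zdual_hasTopDegree (by omega) (hj m))
      hlt hchoose

end Truncated

theorem zprod_isBasis_general
    (p : ℕ) [Fact p.Prime] (F : Type) [Field F] [CharP F p]
    (n r : ℕ)
    (f : LaurentSeries F) :
    LinearIndependent (LaurentSeries F)
      (fun j : Fin n → Fin p =>
        zprod (LaurentSeries F) p n r f (fun s => if h : s < n then (j ⟨s, h⟩ : ℕ) else 0) n) ∧
    Submodule.span (LaurentSeries F)
      (Set.range (fun j : Fin n → Fin p =>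
        zprod (LaurentSeries F) p n r f (fun s => if h : s < n then (j ⟨s, h⟩ : ℕ) else 0) n))
      = ⊤ := by
  have : CharP (LaurentSeries F) p :=
    charP_of_injective_algebraMap (algebraMap F (LaurentSeries F)).injective p
  have hdeg (j : Fin n → Fin p) : HasTopDegree (tgen (LaurentSeries F) p n)
      (zprod (LaurentSeries F) p n r f (fun s => if h : s < n then (j ⟨s, h⟩ : ℕ) else 0) n)
      (finFunctionFinEquiv j) := by
    have hdigits : ∀ s, (if h : s < n then (j ⟨s, h⟩ : ℕ) else 0) < p := fun s => by
      split_ifs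
      exacts [(j _).isLt, (Fact.out : p.Prime).pos]
    have hsum : ∑ s ∈ Finset.range n, (if h : s < n then (j ⟨s, h⟩ : ℕ) else 0) * p ^ s =
        finFunctionFinEquiv j := by
      rw [finFunctionFinEquiv_apply, ← Fin.sum_univ_eq_sum_range]
      simp
    simpa only [hsum] using zprod_hasTopDegree (n := n) (r := r) (f := f) hdigits le_rfl
  refine (tbasis _ p n).dualBasis.linearIndependent_and_span_eq_top_of_repr_triangular
    finFunctionFinEquiv (fun j i hi => ?_) (fun j => ?_)
  · rw [Module.Basis.dualBasis_repr, tbasis_apply]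
    exact (hdeg j).1 i hi
  · rw [Module.Basis.dualBasis_repr, tbasis_apply]
    exact (hdeg j).2.isUnit

/-- The convolution products
`z_1^{j_0}·z_p^{j_1}·⋯·z_{p^{n-1}}^{j_{n-1}}`, `0 ≤ j_s ≤ p-1`, form a `K`-basis of
`H = H_{n,r,f}^*`; in particular the `z_{p^s}` generate `H` as a `K`-algebra. -/
theorem zprod_isBasis
    (p : ℕ) [Fact p.Prime] (F : Type) [Field F] [Fintype F] [CharP F p]
    (n r : ℕ) (hr : 0 < r) (hrn : r < n) (hn2r : n ≤ 2 * r)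
    (f : LaurentSeries F) (hf : f ≠ 0) :
    LinearIndependent (LaurentSeries F)
      (fun j : Fin n → Fin p =>
        zprod (LaurentSeries F) p n r f (fun s => if h : s < n then (j ⟨s, h⟩ : ℕ) else 0) n) ∧
    Submodule.span (LaurentSeries F)
      (Set.range (fun j : Fin n → Fin p =>
        zprod (LaurentSeries F) p n r f (fun s => if h : s < n then (j ⟨s, h⟩ : ℕ) else 0) n))
      = ⊤ :=
  zprod_isBasis_general p F n r f

end
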